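/- arXiv:2004.01490 — 7 statements merged into one kernel-verified Lean document; each statement's English description precedes it below -/
import Mathlib

section
/- For real numbers α, β, γ with β ≠ 0 and all integers n ≥ 0, 0 ≤ k ≤ n, the generalized Stirling numbers defined by the recurrence S(n+1,k;α,β,γ) = S(n,k-1;α,β,γ) + (kβ - nα + γ)·S(n,k;α,β,γ), with S(0,0) = 1, S(n,k) = 0 for k > n or k < 0, satisfy the explicit formula S(n,k;α,β,γ) = (1/(β^k k!)) · Σ_{s=0}^{k} (-1)^{k-s} · C(k,s) · (βs+γ | α)_n, where (t|α)_n = Π_{j=0}^{n-1}(t - jα) is the generalized falling factorial with (t|α)_0 = 1. -/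
/-! The alternating sum is the `k`-th forward difference at `0` of `s ↦ (βs+γ|α)_n`.
Since `(t|α)_{n+1} = (t - nα)(t|α)_n`, passing from `n` to `n + 1` multiplies this sequence by the
affine function `βs + γ - nα`, and the Leibniz rule for an affine factor,
`Δ^{k+1}(g f)(y) = g(y) Δ^{k+1} f(y) + (k+1)β Δ^k f(y+1)`, shows that `Δ^k(...)(0)` obeys the
recurrence of `β^k k! S(n,k)`. -/

open Finset

/-- Generalized factorial polynomial `(t|α)_n = ∏_{j=0}^{n-1} (t - jα)`. -/
noncomputable def gfact (t α : ℝ) (n : ℕ) : ℝ := ∏ j ∈ Finset.range n, (t - j * α)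

/-- Hsu–Shiue generalized Stirling numbers defined by the triangular recurrence
`S(n+1,k) = S(n,k-1) + (kβ - nα + γ) S(n,k)`, with `S(0,0)=1` and `S(n,k)=0` for `k>n`
(the `k = 0` case uses `S(n,-1) = 0`). -/
noncomputable def Srec (α β γ : ℝ) : ℕ → ℕ → ℝ
  | 0, 0 => 1
  | 0, _ + 1 => 0
  | n + 1, 0 => (0 * β - n * α + γ) * Srec α β γ n 0
  | n + 1, k + 1 => Srec α β γ n k + ((k + 1 : ℕ) * β - n * α + γ) * Srec α β γ n (k + 1)

open fwdDiff

lemma fwdDiff_iter_apply_succ {G : Type*} [AddCommGroup G] (f : ℕ → G) (k y : ℕ) :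
    Δ_[1] ^[k] f (y + 1) = Δ_[1] ^[k] f y + Δ_[1] ^[k + 1] f y := by
  rw [Function.iterate_succ_apply', fwdDiff]
  abel

section AffineLeibniz

variable {R : Type*} [CommRing R] (β c : R) (f : ℕ → R)

lemma fwdDiff_affine_mul :
    Δ_[1] (fun s : ℕ ↦ (β * s + c) * f s) = fun y ↦ (β * y + c) * Δ_[1] f y + β * f (y + 1) := by
  ext y
  simp only [fwdDiff, Nat.cast_add, Nat.cast_one]
  ring

lemma fwdDiff_iter_succ_affine_mul (k : ℕ) (y : ℕ) :
    Δ_[1] ^[k + 1] (fun s : ℕ ↦ (β * s + c) * f s) y =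
      (β * y + c) * Δ_[1] ^[k + 1] f y + (k + 1) * β * Δ_[1] ^[k] f (y + 1) := by
  induction k generalizing y with
  | zero => simp [fwdDiff_affine_mul]
  | succ k ih =>
    rw [Function.iterate_succ_apply', fwdDiff, ih, ih, fwdDiff_iter_apply_succ f k (y + 1),
      fwdDiff_iter_apply_succ f (k + 1) y]
    push_cast
    ring

end AffineLeibniz

lemma fwdDiff_iter_succ_const {G : Type*} [AddCommGroup G] (g : G) (k : ℕ) :
    Δ_[1] ^[k + 1] (fun _ : ℕ ↦ g) = 0 := by
  rw [Function.iterate_succ_apply, fwdDiff_const]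
  exact Function.iterate_fixed (fwdDiff_const 1 (0 : G)) k

lemma gfact_zero (t α : ℝ) : gfact t α 0 = 1 := by
  simp [gfact]

lemma gfact_succ (t α : ℝ) (n : ℕ) : gfact t α (n + 1) = (t - n * α) * gfact t α n := by
  rw [gfact, Finset.prod_range_succ, mul_comm]
  rfl

lemma fwdDiff_iter_gfact_eq_Srec (α β γ : ℝ) (n k : ℕ) :
    Δ_[1] ^[k] (fun s : ℕ ↦ gfact (β * s + γ) α n) 0 = β ^ k * k.factorial * Srec α β γ n k := by
  induction n generalizing k with
  | zero =>
    cases k with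
    | zero => simp [gfact_zero, Srec]
    | succ k => simp [gfact_zero, Srec, fwdDiff_iter_succ_const]
  | succ n ih =>
    have hrec : (fun s : ℕ ↦ gfact (β * s + γ) α (n + 1)) =
        fun s : ℕ ↦ (β * s + (γ - n * α)) * gfact (β * s + γ) α n := by
      ext s
      rw [gfact_succ]
      ring
    cases k with
    | zero =>
      have h0 : gfact γ α n = Srec α β γ n 0 := by simpa using ih 0
      simp only [Function.iterate_zero, id_eq, Nat.cast_zero, mul_zero, zero_add, gfact_succ,
        Srec, h0]
      ring
    | succ k =>
      rw [hrec, fwdDiff_iter_succ_affine_mul, fwdDiff_iter_apply_succ, ih, ih, Srec,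
        Nat.factorial_succ]
      push_cast
      ring

theorem stmt0_general (α β γ : ℝ) (hβ : β ≠ 0) (n k : ℕ) :
    Srec α β γ n k =
      (1 / (β ^ k * (Nat.factorial k : ℝ))) *
        ∑ s ∈ Finset.range (k + 1),
          (-1 : ℝ) ^ (k - s) * (Nat.choose k s : ℝ) * gfact (β * s + γ) α n := by
  have hne : β ^ k * (k.factorial : ℝ) ≠ 0 := by positivity
  have key := fwdDiff_iter_gfact_eq_Srec α β γ n k
  rw [fwdDiff_iter_eq_sum_shift] at key
  rw [one_div, eq_inv_mul_iff_mul_eq₀ hne, ← key]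
  simp [zsmul_eq_mul]

theorem stmt0 (α β γ : ℝ) (hβ : β ≠ 0) (n k : ℕ) (hk : k ≤ n) :
    Srec α β γ n k =
      (1 / (β ^ k * (Nat.factorial k : ℝ))) *
        ∑ s ∈ Finset.range (k + 1),
          (-1 : ℝ) ^ (k - s) * (Nat.choose k s : ℝ) * gfact (β * s + γ) α n :=
  stmt0_general α β γ hβ n k
end

section
/- Let A^{λ,x}_n(α,β,γ) = Σ_{k=0}^{n} C(k+λ-1,k) · (-1)^{n+k} · β^k · k! · S(n,k;α,-β,-γ) · x^k. Then for all real α, β ≠ 0, γ, x, all λ ∈ ℕ with λ ≥ 1, and all n ≥ 0: A^{λ,x}_{n+1}(α,β,γ) = γ · A^{λ,x}_n(α,β,γ+α) + x·λ·β · A^{λ+1,x}_n(α,β,γ+β+α). -/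
open Finset

/-- Hsu–Shiue generalized Stirling numbers (explicit formula, β ≠ 0). -/
noncomputable def HS (n k : ℕ) (α β γ : ℝ) : ℝ :=
  (1 / (β ^ k * (Nat.factorial k : ℝ))) *
    ∑ s ∈ Finset.range (k + 1), (-1 : ℝ) ^ (k - s) * (Nat.choose k s : ℝ) * gfact (β * s + γ) α n

/-- Second-type higher order generalized geometric polynomials. -/
noncomputable def A (lam : ℕ) (x : ℝ) (n : ℕ) (α β γ : ℝ) : ℝ :=
  ∑ k ∈ Finset.range (n + 1),
    (Nat.choose (k + lam - 1) k : ℝ) * (-1 : ℝ) ^ (n + k) * β ^ k * (Nat.factorial k : ℝ) *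
      HS n k α (-β) (-γ) * x ^ k

noncomputable def G (α β : ℝ) (n k : ℕ) (γ : ℝ) : ℝ :=
  ∑ s ∈ Finset.range (k + 1),
    (-1 : ℝ) ^ (k + s) * (Nat.choose k s : ℝ) * ∏ j ∈ Finset.range n, (β * s + (γ + j * α))

lemma alt_sum (k : ℕ) (hk : 1 ≤ k) :
    ∑ s ∈ range (k + 1), (-1 : ℝ) ^ (k + s) * (Nat.choose k s : ℝ) = 0 := by
  have h := Int.alternating_sum_range_choose_of_ne (n := k) (by omega)
  have h' : ∑ s ∈ range (k + 1), (-1 : ℝ) ^ s * (Nat.choose k s : ℝ) = 0 := by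
    exact_mod_cast congrArg (fun z : ℤ => (z : ℝ)) h
  calc ∑ s ∈ range (k + 1), (-1 : ℝ) ^ (k + s) * (Nat.choose k s : ℝ)
      = (-1 : ℝ) ^ k * ∑ s ∈ range (k + 1), (-1 : ℝ) ^ s * (Nat.choose k s : ℝ) := by
        rw [mul_sum]; exact Finset.sum_congr rfl fun s _ => by rw [pow_add]; ring
    _ = 0 := by rw [h', mul_zero]

lemma shift (β : ℝ) (c : ℕ → ℝ) (n k : ℕ) :
    ∑ s ∈ range (k + 2),
      (-1 : ℝ) ^ (k + 1 + s) * (Nat.choose (k + 1) s : ℝ) * (s : ℝ) * ∏ j ∈ range n, (β * s + c j)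
    = (k + 1 : ℝ) * ∑ t ∈ range (k + 1),
        (-1 : ℝ) ^ (k + t) * (Nat.choose k t : ℝ) * ∏ j ∈ range n, (β * t + (β + c j)) := by
  rw [Finset.sum_range_succ']
  have h0 : (-1 : ℝ) ^ (k + 1 + 0) * (Nat.choose (k + 1) 0 : ℝ) * ((0 : ℕ) : ℝ) *
      ∏ j ∈ range n, (β * ((0 : ℕ) : ℝ) + c j) = 0 := by simp
  rw [h0, add_zero, mul_sum]
  refine Finset.sum_congr rfl fun t ht => ?_
  have hprod : ∏ j ∈ range n, (β * ((t + 1 : ℕ) : ℝ) + c j)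
      = ∏ j ∈ range n, (β * t + (β + c j)) := by
    refine Finset.prod_congr rfl fun j _ => ?_; push_cast; ring
  have hc : ((Nat.choose (k + 1) (t + 1) : ℕ) : ℝ) * ((t + 1 : ℕ) : ℝ)
      = ((k + 1 : ℕ) : ℝ) * (Nat.choose k t : ℝ) := by
    exact_mod_cast congrArg (fun m : ℕ => (m : ℝ)) (Nat.add_one_mul_choose_eq k t).symm
  have hsgn : (-1 : ℝ) ^ (k + 1 + (t + 1)) = (-1) ^ (k + t) := by
    rw [show k + 1 + (t + 1) = (k + t) + 2 by omega, pow_add]; norm_num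
  rw [hprod, hsgn]
  push_cast at hc ⊢
  linear_combination ((-1 : ℝ) ^ (k + t) * ∏ j ∈ range n, (β * t + (β + c j))) * hc

lemma vanish (β : ℝ) : ∀ (n : ℕ) (c : ℕ → ℝ) (k : ℕ), n < k →
    ∑ s ∈ range (k + 1), (-1 : ℝ) ^ (k + s) * (Nat.choose k s : ℝ) *
      ∏ j ∈ range n, (β * s + c j) = 0 := by
  intro n
  induction n with
  | zero => intro c k hk; simpa using alt_sum k hk
  | succ n ih =>
    intro c k hk
    obtain ⟨k', rfl⟩ : ∃ k', k = k' + 1 := ⟨k - 1, by omega⟩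
    have expand : ∀ s ∈ range (k' + 1 + 1),
        (-1 : ℝ) ^ (k' + 1 + s) * (Nat.choose (k' + 1) s : ℝ) *
          ∏ j ∈ range (n + 1), (β * s + c j)
        = c 0 * ((-1 : ℝ) ^ (k' + 1 + s) * (Nat.choose (k' + 1) s : ℝ) *
            ∏ j ∈ range n, (β * s + c (j + 1)))
          + β * ((-1 : ℝ) ^ (k' + 1 + s) * (Nat.choose (k' + 1) s : ℝ) * (s : ℝ) *
            ∏ j ∈ range n, (β * s + c (j + 1))) := by
      intro s _
      rw [Finset.prod_range_succ']
      ring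
    rw [Finset.sum_congr rfl expand, Finset.sum_add_distrib, ← mul_sum, ← mul_sum,
      show k' + 1 + 1 = k' + 2 from rfl, shift β (fun j => c (j + 1)) n k',
      ih (fun j => c (j + 1)) (k' + 1) (by omega), ih (fun j => β + c (j + 1)) k' (by omega)]
    ring

lemma G_rec (α β γ : ℝ) (n k : ℕ) :
    G α β (n + 1) k γ = γ * G α β n k (γ + α) + β * k * G α β n (k - 1) (γ + β + α) := by
  cases k with
  | zero =>
    have l : G α β (n + 1) 0 γ = ∏ j ∈ range (n + 1), (γ + (j : ℝ) * α) := by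
      unfold G
      rw [Finset.sum_range_one]
      norm_num
    have r : G α β n 0 (γ + α) = ∏ j ∈ range n, ((γ + α) + (j : ℝ) * α) := by
      unfold G
      rw [Finset.sum_range_one]
      norm_num
    rw [l, r, Finset.prod_range_succ']
    have hp : ∏ j ∈ range n, (γ + ((j + 1 : ℕ) : ℝ) * α)
        = ∏ j ∈ range n, ((γ + α) + (j : ℝ) * α) := by
      refine Finset.prod_congr rfl fun j _ => ?_; push_cast; ring
    rw [hp]
    push_cast
    ring
  | succ k' =>
    have expand : ∀ s ∈ range (k' + 1 + 1),
        (-1 : ℝ) ^ (k' + 1 + s) * (Nat.choose (k' + 1) s : ℝ) *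
          ∏ j ∈ range (n + 1), (β * s + (γ + j * α))
        = γ * ((-1 : ℝ) ^ (k' + 1 + s) * (Nat.choose (k' + 1) s : ℝ) *
            ∏ j ∈ range n, (β * s + ((γ + α) + j * α)))
          + β * ((-1 : ℝ) ^ (k' + 1 + s) * (Nat.choose (k' + 1) s : ℝ) * (s : ℝ) *
            ∏ j ∈ range n, (β * s + ((γ + α) + j * α))) := by
      intro s _
      rw [Finset.prod_range_succ']
      have hp : ∏ j ∈ range n, (β * s + (γ + ((j + 1 : ℕ):ℝ) * α))
          = ∏ j ∈ range n, (β * s + ((γ + α) + j * α)) := by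
        refine Finset.prod_congr rfl fun j _ => ?_; push_cast; ring
      rw [hp]
      push_cast
      ring
    unfold G
    rw [Finset.sum_congr rfl expand, Finset.sum_add_distrib, ← mul_sum, ← mul_sum,
      show k' + 1 + 1 = k' + 2 from rfl, shift β (fun j => (γ + α) + j * α) n k']
    have hp2 : ∀ t : ℕ, ∏ j ∈ range n, (β * t + (β + ((γ + α) + j * α)))
        = ∏ j ∈ range n, (β * t + ((γ + β + α) + j * α)) := by
      intro t; refine Finset.prod_congr rfl fun j _ => ?_; ring
    simp only [hp2, Nat.add_sub_cancel]
    push_cast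
    ring

lemma neg_one_pow_sub (k s : ℕ) (h : s ≤ k) : (-1 : ℝ) ^ (k - s) = (-1) ^ (k + s) := by
  rw [show k + s = (k - s) + 2 * s by omega, pow_add, pow_mul]
  norm_num

lemma A_eq (lam : ℕ) (x α β γ : ℝ) (hβ : β ≠ 0) (n : ℕ) :
    A lam x n α β γ
      = ∑ k ∈ range (n + 1), (Nat.choose (k + lam - 1) k : ℝ) * x ^ k * G α β n k γ := by
  unfold A HS G gfact
  refine Finset.sum_congr rfl fun k hk => ?_
  have hinner : ∑ s ∈ range (k + 1), (-1 : ℝ) ^ (k - s) * (Nat.choose k s : ℝ) *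
        ∏ j ∈ range n, (-β * s + -γ - j * α)
      = (-1 : ℝ) ^ n * ∑ s ∈ range (k + 1), (-1 : ℝ) ^ (k + s) * (Nat.choose k s : ℝ) *
        ∏ j ∈ range n, (β * s + (γ + j * α)) := by
    rw [mul_sum]
    refine Finset.sum_congr rfl fun s hs => ?_
    have hs' : s ≤ k := by simpa using Nat.lt_succ_iff.mp (mem_range.mp hs)
    have hp : ∏ j ∈ range n, (-β * s + -γ - j * α)
        = (-1 : ℝ) ^ n * ∏ j ∈ range n, (β * s + (γ + j * α)) := by
      calc ∏ j ∈ range n, (-β * (s:ℝ) + -γ - j * α)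
          = ∏ j ∈ range n, ((-1) * (β * s + (γ + j * α))) :=
            Finset.prod_congr rfl fun j _ => by ring
        _ = (-1 : ℝ) ^ n * ∏ j ∈ range n, (β * s + (γ + j * α)) := by
            rw [Finset.prod_mul_distrib, Finset.prod_const, Finset.card_range]
    rw [hp, neg_one_pow_sub k s hs']
    ring
  rw [hinner]
  have hfac : (Nat.factorial k : ℝ) ≠ 0 := Nat.cast_ne_zero.mpr (Nat.factorial_ne_zero k)
  have hbk : β ^ k ≠ 0 := pow_ne_zero k hβ
  have hkey : (-1 : ℝ) ^ (n + k) * β ^ k * (Nat.factorial k : ℝ) *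
      (1 / ((-β) ^ k * (Nat.factorial k : ℝ))) * (-1 : ℝ) ^ n = 1 := by
    have hD : ((-β : ℝ) ^ k * (Nat.factorial k : ℝ)) ≠ 0 :=
      mul_ne_zero (pow_ne_zero k (neg_ne_zero.mpr hβ)) hfac
    rw [mul_comm, ← mul_assoc, mul_one_div, div_eq_one_iff_eq hD, neg_pow]
    have h2 : (-1 : ℝ) ^ n * ((-1 : ℝ) ^ (n + k)) = (-1) ^ k := by
      rw [← pow_add, show n + (n + k) = 2 * n + k by omega, pow_add, pow_mul]
      norm_num
    linear_combination (β ^ k * (Nat.factorial k : ℝ)) * h2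
  calc (Nat.choose (k + lam - 1) k : ℝ) * (-1 : ℝ) ^ (n + k) * β ^ k * (Nat.factorial k : ℝ) *
        ((1 / ((-β) ^ k * (Nat.factorial k : ℝ))) *
          ((-1 : ℝ) ^ n * ∑ s ∈ range (k + 1), (-1 : ℝ) ^ (k + s) * (Nat.choose k s : ℝ) *
            ∏ j ∈ range n, (β * s + (γ + j * α)))) * x ^ k
      = (Nat.choose (k + lam - 1) k : ℝ) * x ^ k *
          (∑ s ∈ range (k + 1), (-1 : ℝ) ^ (k + s) * (Nat.choose k s : ℝ) *
            ∏ j ∈ range n, (β * s + (γ + j * α))) *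
          ((-1 : ℝ) ^ (n + k) * β ^ k * (Nat.factorial k : ℝ) *
            (1 / ((-β) ^ k * (Nat.factorial k : ℝ))) * (-1 : ℝ) ^ n) := by ring
    _ = _ := by rw [hkey, mul_one]

theorem stmt2 (α β γ x : ℝ) (hβ : β ≠ 0) (lam : ℕ) (hlam : 1 ≤ lam) (n : ℕ) :
    A lam x (n + 1) α β γ =
      γ * A lam x n α β (γ + α) + x * lam * β * A (lam + 1) x n α β (γ + β + α) := by
  rw [A_eq lam x α β γ hβ (n + 1), A_eq lam x α β (γ + α) hβ n,
    A_eq (lam + 1) x α β (γ + β + α) hβ n]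
  have hG : ∀ k ∈ range (n + 1 + 1),
      (Nat.choose (k + lam - 1) k : ℝ) * x ^ k * G α β (n + 1) k γ
      = γ * ((Nat.choose (k + lam - 1) k : ℝ) * x ^ k * G α β n k (γ + α))
        + (Nat.choose (k + lam - 1) k : ℝ) * x ^ k *
            (β * k * G α β n (k - 1) (γ + β + α)) := by
    intro k _
    rw [G_rec]
    ring
  rw [Finset.sum_congr rfl hG, Finset.sum_add_distrib, ← mul_sum]
  congr 1
  · congr 1
    rw [Finset.sum_range_succ]
    have hv : G α β n (n + 1) (γ + α) = 0 :=
      vanish β n (fun j => (γ + α) + j * α) (n + 1) (Nat.lt_succ_self n)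
    rw [hv]
    simp
  · rw [Finset.sum_range_succ']
    have h0 : (Nat.choose (0 + lam - 1) 0 : ℝ) * x ^ 0 *
        (β * ((0 : ℕ) : ℝ) * G α β n (0 - 1) (γ + β + α)) = 0 := by simp
    rw [h0, add_zero, mul_sum]
    refine Finset.sum_congr rfl fun m hm => ?_
    have hidx : m + 1 + lam - 1 = m + lam := by omega
    have hidx2 : m + (lam + 1) - 1 = m + lam := by omega
    rw [hidx, hidx2]
    have hc : ((Nat.choose (m + lam) (m + 1) : ℕ) : ℝ) * ((m + 1 : ℕ) : ℝ)
        = ((Nat.choose (m + lam) m : ℕ) : ℝ) * (lam : ℝ) := by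
      have := Nat.choose_succ_right_eq (m + lam) m
      rw [Nat.add_sub_cancel_left] at this
      exact_mod_cast congrArg (fun z : ℕ => (z : ℝ)) this
    simp only [Nat.add_sub_cancel]
    rw [pow_succ]
    push_cast at hc ⊢
    linear_combination (x ^ m * x * β * G α β n m (γ + β + α)) * hc
end

section
/- For all real α, β ≠ 0, γ, x, λ ∈ ℕ with λ ≥ 1, and n ≥ 0: x · A^{λ+1,x}_n(α,β,γ+β) = (x+1) · A^{λ+1,x}_n(α,β,γ) - A^{λ,x}_n(α,β,γ). -/
open Finset

/-!
Writing `g t = (-β t - γ | α)_n`, the inner sum of `A` is an iterated forward difference, so that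
`A^{λ,x}_n(α,β,γ) = (-1)^n ∑_k C(k+λ-1,k) x^k Δ^k g(0)`. Replacing `γ` by `γ + β` shifts `g` by one,
and `Δ^k g(1) = Δ^k g(0) + Δ^{k+1} g(0)`. Since `g` is a polynomial of degree at most `n`,
`Δ^{n+1} g = 0`, and the identity reduces to Pascal's rule `C(k+1+λ,k+1) = C(k+λ,k) + C(k+λ,k+1)`.
-/

open Polynomial fwdDiff

theorem fwdDiff_iter_apply_add_self {M G : Type*} [AddCommMonoid M] [AddCommGroup G]
    (h : M) (f : M → G) (k : ℕ) (y : M) :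
    Δ_[h] ^[k] f (y + h) = Δ_[h] ^[k] f y + Δ_[h] ^[k + 1] f y := by
  rw [Function.iterate_succ_apply', fwdDiff, add_sub_cancel]

theorem HS_eq_fwdDiff_iter (n k : ℕ) (α β γ : ℝ) :
    HS n k α β γ = Δ_[1] ^[k] (fun t ↦ gfact (β * t + γ) α n) 0 / (β ^ k * k.factorial) := by
  simp [HS, fwdDiff_iter_eq_sum_shift, div_eq_inv_mul]

theorem exists_natDegree_le_eval_eq_gfact (a b α : ℝ) (n : ℕ) :
    ∃ P : ℝ[X], P.natDegree ≤ n ∧ P.eval = fun t ↦ gfact (a * t + b) α n := by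
  refine ⟨∏ j ∈ range n, (C a * X + C (b - j * α)), ?_, ?_⟩
  · refine (natDegree_prod_le _ _).trans ?_
    exact (sum_le_card_nsmul _ _ 1 fun j _ ↦ natDegree_linear_le).trans (by simp)
  · ext t
    simp only [eval_prod, eval_add, eval_mul, eval_C, eval_X, gfact]
    exact Finset.prod_congr rfl fun j _ ↦ by ring

theorem fwdDiff_iter_gfact_affine_eq_zero (a b α : ℝ) (n : ℕ) :
    Δ_[1] ^[n + 1] (fun t ↦ gfact (a * t + b) α n) = 0 := by
  obtain ⟨P, hdeg, hP⟩ := exists_natDegree_le_eval_eq_gfact a b α n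
  rw [← hP]
  exact fwdDiff_iter_eq_zero_of_degree_lt (Nat.lt_succ_of_le hdeg)

theorem A_eq_sum_fwdDiff_iter {β : ℝ} (hβ : β ≠ 0) (lam : ℕ) (x : ℝ) (n : ℕ) (α γ : ℝ) :
    A lam x n α β γ = (-1) ^ n * ∑ k ∈ range (n + 1),
      ((k + lam - 1).choose k : ℝ) * x ^ k * Δ_[1] ^[k] (fun t ↦ gfact (-β * t + -γ) α n) 0 := by
  rw [A, mul_sum]
  refine sum_congr rfl fun k _ ↦ ?_
  rw [HS_eq_fwdDiff_iter, neg_pow β, pow_add]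
  have : (k.factorial : ℝ) ≠ 0 := by positivity
  field_simp

theorem sum_choose_mul_pow_mul_add_succ {R : Type*} [CommRing R] (lam n : ℕ) (x : R)
    (d : ℕ → R) (hd : d (n + 1) = 0) :
    x * ∑ k ∈ range (n + 1), ((k + lam).choose k : R) * x ^ k * (d k + d (k + 1)) =
      (x + 1) * ∑ k ∈ range (n + 1), ((k + lam).choose k : R) * x ^ k * d k -
        ∑ k ∈ range (n + 1), ((k + lam - 1).choose k : R) * x ^ k * d k := by
  have pascal (k : ℕ) : (k + 1 + lam).choose (k + 1) =
      (k + lam).choose k + (k + 1 + lam - 1).choose (k + 1) := by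
    rw [show k + 1 + lam = k + lam + 1 by omega, Nat.choose_succ_succ', add_tsub_cancel_right]
  suffices x * ∑ k ∈ range (n + 1), ((k + lam).choose k : R) * x ^ k * d (k + 1) =
      ∑ k ∈ range (n + 1), (((k + lam).choose k : R) - (k + lam - 1).choose k) * x ^ k * d k by
    simp only [mul_add, sum_add_distrib, sub_mul, sum_sub_distrib] at this ⊢
    linear_combination this
  rw [mul_sum, sum_range_succ, sum_range_succ', hd, mul_zero, mul_zero, add_zero]
  simp only [pascal, zero_add, Nat.choose_zero_right, sub_self, zero_mul, add_zero, Nat.cast_add,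
    add_sub_cancel_right, Nat.succ_add_sub_one]
  exact sum_congr rfl fun k _ ↦ by ring

theorem stmt3_general (α β γ x : ℝ) (hβ : β ≠ 0) (lam : ℕ) (n : ℕ) :
    x * A (lam + 1) x n α β (γ + β) =
      (x + 1) * A (lam + 1) x n α β γ - A lam x n α β γ := by
  set g : ℝ → ℝ := fun t ↦ gfact (-β * t + -γ) α n
  have hshift : (fun t ↦ gfact (-β * t + -(γ + β)) α n) = fun t ↦ g (t + 1) := by
    funext t; simp only [g]; congr 1; ring
  have key := sum_choose_mul_pow_mul_add_succ lam n x (fun k ↦ Δ_[1] ^[k] g 0)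
    (congrFun (fwdDiff_iter_gfact_affine_eq_zero _ _ α n) 0)
  simp only [A_eq_sum_fwdDiff_iter hβ, hshift, fwdDiff_iter_comp_add,
    fwdDiff_iter_apply_add_self, add_tsub_cancel_right, ← add_assoc]
  linear_combination (-1 : ℝ) ^ n * key

theorem stmt3 (α β γ x : ℝ) (hβ : β ≠ 0) (lam : ℕ) (hlam : 1 ≤ lam) (n : ℕ) :
    x * A (lam + 1) x n α β (γ + β) =
      (x + 1) * A (lam + 1) x n α β γ - A lam x n α β γ :=
  stmt3_general α β γ x hβ lam n
end

section
/- Let S_n(x;α,β,r) = Σ_{k=0}^{n} S(n,k;α,β,r)·x^k be the generalized exponential (Bell) polynomial. Then for all real α, β ≠ 0, r, x > 0, all λ ∈ ℕ with λ ≥ 1, and all n ≥ 0: A^{λ,x}_n(α,β,r) = ((-1)^n / Γ(λ)) · ∫_0^∞ z^{λ-1} · S_n(-βxz; α, -β, -r) · e^{-z} dz. -/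
/-!
Expand `S_n` termwise: against `z ^ (λ - 1) e^{-z}` the monomial `z ^ k` integrates to
`(λ - 1 + k)! = C(k + λ - 1, k) · k! · Γ(λ)`, which is the `k`-th coefficient of `A^{λ,x}_n`.
-/

open Finset MeasureTheory

/-- Generalized exponential (Bell) polynomials. -/
noncomputable def Sexp (n : ℕ) (x α β r : ℝ) : ℝ :=
  ∑ k ∈ Finset.range (n + 1), HS n k α β r * x ^ k

lemma integrableOn_pow_mul_exp_neg_Ioi (m : ℕ) :
    IntegrableOn (fun z : ℝ => z ^ m * Real.exp (-z)) (Set.Ioi 0) := by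
  refine (Real.GammaIntegral_convergent (s := (m : ℝ) + 1) (by positivity)).congr_fun
    (fun z _ => ?_) measurableSet_Ioi
  simp only [add_sub_cancel_right, Real.rpow_natCast, mul_comm]

lemma integral_pow_mul_exp_neg_Ioi (m : ℕ) :
    ∫ z in Set.Ioi (0 : ℝ), z ^ m * Real.exp (-z) = (m.factorial : ℝ) := by
  rw [← Real.Gamma_nat_eq_factorial, Real.Gamma_eq_integral (by positivity)]
  refine setIntegral_congr_fun measurableSet_Ioi fun z _ => ?_
  simp only [add_sub_cancel_right, Real.rpow_natCast, mul_comm]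

lemma integral_pow_mul_poly_mul_exp_neg_Ioi (m N : ℕ) (c : ℕ → ℝ) (a : ℝ) :
    ∫ z in Set.Ioi (0 : ℝ), z ^ m * (∑ k ∈ range N, c k * (a * z) ^ k) * Real.exp (-z) =
      ∑ k ∈ range N, c k * a ^ k * ((m + k).factorial : ℝ) := by
  have hexpand : ∀ z : ℝ, z ^ m * (∑ k ∈ range N, c k * (a * z) ^ k) * Real.exp (-z) =
      ∑ k ∈ range N, c k * a ^ k * (z ^ (m + k) * Real.exp (-z)) := by
    intro z
    simp only [mul_sum, sum_mul, pow_add, mul_pow]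
    exact sum_congr rfl fun k _ => by ring
  simp only [hexpand]
  rw [integral_finsetSum _ fun k _ => (integrableOn_pow_mul_exp_neg_Ioi (m + k)).const_mul _]
  simp only [integral_const_mul, integral_pow_mul_exp_neg_Ioi]

theorem stmt11_general (α β r x : ℝ) (lam : ℕ) (hlam : 1 ≤ lam) (n : ℕ) :
    A lam x n α β r =
      ((-1 : ℝ) ^ n / Real.Gamma (lam : ℝ)) *
        ∫ z in Set.Ioi (0 : ℝ), z ^ (lam - 1) * Sexp n (-β * x * z) α (-β) (-r) * Real.exp (-z) := by
  obtain ⟨m, rfl⟩ := Nat.exists_eq_add_of_le' hlam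
  unfold Sexp
  rw [integral_pow_mul_poly_mul_exp_neg_Ioi, Nat.cast_add_one, Real.Gamma_nat_eq_factorial,
    A, mul_sum]
  refine sum_congr rfl fun k _ => ?_
  have hfac : ((m + k).factorial : ℝ) = (m + k).choose k * m.factorial * k.factorial := by
    exact_mod_cast (Nat.add_choose_mul_factorial_mul_factorial m k).symm
  have hm : (m.factorial : ℝ) ≠ 0 := by positivity
  rw [show k + (m + 1) - 1 = m + k by omega, Nat.add_sub_cancel, hfac]
  field_simp
  ring

theorem stmt11 (α β r x : ℝ) (hβ : β ≠ 0) (hx : 0 < x) (lam : ℕ) (hlam : 1 ≤ lam) (n : ℕ) :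
    A lam x n α β r =
      ((-1 : ℝ) ^ n / Real.Gamma (lam : ℝ)) *
        ∫ z in Set.Ioi (0 : ℝ), z ^ (lam - 1) * Sexp n (-β * x * z) α (-β) (-r) * Real.exp (-z) :=
  stmt11_general α β r x lam hlam n
end

section
/- Define the higher order generalized Euler polynomials E_n^{(λ)}(α,β,γ) = Σ_{k=0}^{n} S(n,k;α,β,γ) · C(k+λ-1,k) · k! · (-β)^k / 2^k. Then for all real α, β ≠ 0, γ, all λ ≥ 1, and all n ≥ 0: E_n^{(λ)}(α,β,γ) = (-1)^n · A^{λ,-1/2}_n(α,-β,-γ) = A^{λ,-1/2}_n(-α,β,γ). -/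
open Finset

/-- Higher order generalized Euler polynomials. -/
noncomputable def E (lam n : ℕ) (α β γ : ℝ) : ℝ :=
  ∑ k ∈ Finset.range (n + 1),
    HS n k α β γ * (Nat.choose (k + lam - 1) k : ℝ) * (Nat.factorial k : ℝ) * (-β) ^ k / 2 ^ k

lemma gfact_neg (t α : ℝ) (n : ℕ) : gfact (-t) (-α) n = (-1) ^ n * gfact t α n := by
  unfold gfact
  rw [show ((-1 : ℝ) ^ n) = ∏ _j ∈ Finset.range n, (-1 : ℝ) by simp, ← Finset.prod_mul_distrib]
  exact Finset.prod_congr rfl fun j _ => by ring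

lemma HS_neg (n k : ℕ) (α β γ : ℝ) :
    HS n k (-α) (-β) (-γ) = (-1) ^ (n + k) * HS n k α β γ := by
  unfold HS
  have h1 : ∀ s ∈ Finset.range (k + 1),
      (-1 : ℝ) ^ (k - s) * (Nat.choose k s : ℝ) * gfact (-β * s + -γ) (-α) n
      = (-1 : ℝ) ^ n * ((-1 : ℝ) ^ (k - s) * (Nat.choose k s : ℝ) * gfact (β * s + γ) α n) := by
    intro s _
    rw [show (-β * s + -γ) = -(β * s + γ) by ring, gfact_neg]; ring
  rw [Finset.sum_congr rfl h1, ← Finset.mul_sum]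
  have hβk : ((-β : ℝ)) ^ k = (-1) ^ k * β ^ k := by rw [neg_pow]
  rw [hβk, pow_add]
  rcases Nat.even_or_odd k with h | h <;>
    simp [h.neg_one_pow] <;> ring

theorem stmt13 (α β γ : ℝ) (hβ : β ≠ 0) (lam : ℕ) (hlam : 1 ≤ lam) (n : ℕ) :
    E lam n α β γ = (-1 : ℝ) ^ n * A lam (-1/2) n α (-β) (-γ) ∧
    E lam n α β γ = A lam (-1/2) n (-α) β γ := by
  have e2 : ∀ k : ℕ, ((-1/2 : ℝ)) ^ k = (-1) ^ k * (1/2) ^ k := by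
    intro k
    rw [show (-1/2 : ℝ) = -(1/2) by norm_num, neg_pow]
  constructor
  · unfold E A
    rw [Finset.mul_sum]
    refine Finset.sum_congr rfl fun k _ => ?_
    rw [neg_neg, neg_neg, neg_pow β, e2, pow_add]
    rcases Nat.even_or_odd n with h | h <;> rcases Nat.even_or_odd k with h2 | h2 <;>
      simp [h.neg_one_pow, h2.neg_one_pow] <;> ring
  · unfold E A
    refine Finset.sum_congr rfl fun k _ => ?_
    rw [HS_neg, neg_pow β, e2, pow_add]
    rcases Nat.even_or_odd n with h | h <;> rcases Nat.even_or_odd k with h2 | h2 <;>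
      simp [h.neg_one_pow, h2.neg_one_pow] <;> ring
end

section
/- For all real α, β ≠ 0, γ, all λ ∈ ℕ with λ ≥ 1, and all n ≥ 0, the higher order generalized Euler polynomials satisfy two explicit formulas: E_n^{(λ)}(α,β,γ) = Σ_{k=0}^{n} S(n,k;α,β,γ)·C(k+λ-1,k)·k!·(-β)^k/2^k and E_n^{(λ)}(α,β,γ) = Σ_{k=0}^{n} S(n,k;α,-β,γ-βλ)·C(k+λ-1,k)·k!·β^k/2^k; in particular these two sums are equal. -/
open Finset
section AuxHSE
open fwdDiff

-- iterated difference of the zero function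
lemma fwd_zero_iter (r : ℕ) : (fwdDiff (1:ℤ))^[r] (0 : ℤ → ℝ) = 0 := by
  induction r with
  | zero => rfl
  | succ r ih =>
      rw [Function.iterate_succ_apply, show fwdDiff (1:ℤ) (0:ℤ→ℝ) = 0 from
        funext fun _ => sub_self _, ih]

lemma iter_zero_of_ge (f : ℤ → ℝ) (N : ℕ) (hf : (fwdDiff (1:ℤ))^[N] f = 0) {m : ℕ}
    (hm : N ≤ m) : (fwdDiff (1:ℤ))^[m] f = 0 := by
  obtain ⟨r, rfl⟩ := Nat.exists_eq_add_of_le hm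
  rw [add_comm, Function.iterate_add_apply, hf, fwd_zero_iter]

-- fwdDiff of a polynomial evaluation
lemma fwd_poly (P : Polynomial ℝ) :
    fwdDiff (1:ℤ) (fun s : ℤ => P.eval (s : ℝ)) =
      fun s : ℤ => (P.comp (Polynomial.X + 1) - P).eval (s : ℝ) := by
  funext s
  simp only [fwdDiff, Polynomial.eval_sub, Polynomial.eval_comp, Polynomial.eval_add,
    Polynomial.eval_X, Polynomial.eval_one]
  push_cast
  ring_nf

lemma vanish_of_natDegree_le : ∀ (d : ℕ) (P : Polynomial ℝ), P.natDegree ≤ d →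
    (fwdDiff (1:ℤ))^[d+1] (fun s : ℤ => P.eval (s:ℝ)) = 0 := by
  intro d
  induction d with
  | zero =>
      intro P hP
      obtain ⟨a, rfl⟩ := Polynomial.natDegree_eq_zero.mp (le_antisymm hP (Nat.zero_le _))
      funext s
      simp [fwdDiff]
  | succ d ih =>
      intro P hP
      rw [Function.iterate_succ_apply, fwd_poly]
      apply ih
      by_cases hP0 : P = 0
      · simp [hP0]
      have hX : (Polynomial.X + 1 : Polynomial ℝ) = Polynomial.X + Polynomial.C 1 := by
        rw [map_one]
      have hXdeg : (Polynomial.X + 1 : Polynomial ℝ).natDegree = 1 := by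
        rw [hX]; exact Polynomial.natDegree_X_add_C 1
      have hcomp_deg : (P.comp (Polynomial.X + 1)).natDegree = P.natDegree := by
        rw [Polynomial.natDegree_comp, hXdeg, mul_one]
      have hlc : (P.comp (Polynomial.X + 1)).leadingCoeff = P.leadingCoeff := by
        rw [Polynomial.leadingCoeff_comp (by rw [hXdeg]; norm_num)]
        rw [hX, (Polynomial.monic_X_add_C (1:ℝ)).leadingCoeff, one_pow, mul_one]
      have hcomp0 : P.comp (Polynomial.X + 1) ≠ 0 := by
        intro h
        apply hP0
        rw [← Polynomial.leadingCoeff_eq_zero, ← hlc, h, Polynomial.leadingCoeff_zero]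
      by_cases hQ0 : P.comp (Polynomial.X + 1) - P = 0
      · simp [hQ0]
      have hdeq : (P.comp (Polynomial.X + 1)).degree = P.degree := by
        rw [Polynomial.degree_eq_natDegree hcomp0, Polynomial.degree_eq_natDegree hP0, hcomp_deg]
      have hlt := Polynomial.degree_sub_lt hdeq hcomp0 hlc
      have h2 := Polynomial.natDegree_lt_natDegree hQ0 hlt
      rw [hcomp_deg] at h2
      omega

-- k-th difference at 0 as alternating sum
lemma diff_sum (g : ℤ → ℝ) (k : ℕ) :
    (fwdDiff (1:ℤ))^[k] g 0 =
      ∑ s ∈ range (k+1), (-1:ℝ)^(k-s) * (k.choose s : ℝ) * g (s : ℤ) := by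
  rw [fwdDiff_iter_eq_sum_shift]
  apply Finset.sum_congr rfl
  intro s _
  have : ((0:ℤ) + s • (1:ℤ)) = (s : ℤ) := by simp
  rw [this, zsmul_eq_mul]
  push_cast
  ring

-- reflection lemma
lemma diff_reflect (k : ℕ) : ∀ (f : ℤ → ℝ) (c : ℤ),
    (fwdDiff (1:ℤ))^[k] (fun s : ℤ => f (-s - c)) =
      fun s : ℤ => (-1:ℝ)^k * ((fwdDiff (1:ℤ))^[k] f) (-s - c - k) := by
  induction k with
  | zero => intro f c; funext s; simp
  | succ k ih =>
      intro f c
      have h1 : fwdDiff (1:ℤ) (fun s : ℤ => f (-s - c)) =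
          fun s : ℤ => (-1:ℝ) * (fwdDiff (1:ℤ) f) (-s - (c+1)) := by
        funext s
        simp only [fwdDiff]
        have e1 : (-(s+1) - c : ℤ) = -s - (c+1) := by ring
        have e2 : (-s - (c+1) + 1 : ℤ) = -s - c := by ring
        rw [e1, e2]
        ring
      rw [Function.iterate_succ_apply, h1]
      have h2 : (fun s : ℤ => (-1:ℝ) * (fwdDiff (1:ℤ) f) (-s - (c+1))) =
          (-1:ℝ) • (fun s : ℤ => (fwdDiff (1:ℤ) f) (-s - (c+1))) := by
        funext s; simp
      rw [h2, fwdDiff_iter_const_smul, ih (fwdDiff (1:ℤ) f) (c+1)]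
      funext s
      rw [← Function.iterate_succ_apply]
      simp only [Pi.smul_apply, smul_eq_mul]
      have e3 : (-s - (c+1) - k : ℤ) = -s - c - (k+1 : ℕ) := by push_cast; ring
      rw [e3]
      ring

-- inverse Newton expansion at negative points
lemma invNewton (f : ℤ → ℝ) (N : ℕ) (hf : (fwdDiff (1:ℤ))^[N] f = 0) :
    ∀ (t k : ℕ), (fwdDiff (1:ℤ))^[k] f (-(t:ℤ)) =
      ∑ j ∈ range (N+1), (-1:ℝ)^j * ((t+j-1).choose j : ℝ) * (fwdDiff (1:ℤ))^[k+j] f 0 := by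
  have hvan : ∀ m, N ≤ m → (fwdDiff (1:ℤ))^[m] f = 0 := fun m hm => iter_zero_of_ge f N hf hm
  have htop : ∀ (y : ℤ) (t k : ℕ), N ≤ k → (fwdDiff (1:ℤ))^[k] f y =
      ∑ j ∈ range (N+1), (-1:ℝ)^j * ((t+j-1).choose j : ℝ) * (fwdDiff (1:ℤ))^[k+j] f 0 := by
    intro y t k hk
    rw [hvan k hk]
    rw [Finset.sum_eq_zero]
    · rfl
    intro j _
    rw [hvan (k+j) (by omega)]
    simp
  intro t
  induction t with
  | zero =>
      intro k
      rw [Finset.sum_eq_single 0]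
      · simp
      · intro j _ hj
        have : (0 + j - 1 : ℕ) < j := by omega
        rw [Nat.choose_eq_zero_of_lt this]
        simp
      · intro h; simp at h
  | succ t iht =>
      -- downward induction on k
      have key : ∀ (d k : ℕ), N ≤ k + d → (fwdDiff (1:ℤ))^[k] f (-((t+1:ℕ):ℤ)) =
          ∑ j ∈ range (N+1), (-1:ℝ)^j * (((t+1)+j-1).choose j : ℝ) *
            (fwdDiff (1:ℤ))^[k+j] f 0 := by
        intro d
        induction d with
        | zero => intro k hk; exact htop _ _ k (by omega)
        | succ d ihd =>
            intro k hk
            by_cases hNk : N ≤ k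
            · exact htop _ _ k hNk
            have hstep : (fwdDiff (1:ℤ))^[k] f (-((t+1:ℕ):ℤ)) =
                (fwdDiff (1:ℤ))^[k] f (-(t:ℤ)) - (fwdDiff (1:ℤ))^[k+1] f (-((t+1:ℕ):ℤ)) := by
              have h1 : (fwdDiff (1:ℤ))^[k+1] f (-((t+1:ℕ):ℤ)) =
                  (fwdDiff (1:ℤ))^[k] f ((-((t+1:ℕ):ℤ)) + 1) -
                    (fwdDiff (1:ℤ))^[k] f (-((t+1:ℕ):ℤ)) := by
                rw [Function.iterate_succ_apply']
                rfl
              have h2 : ((-((t+1:ℕ):ℤ)) + 1) = -(t:ℤ) := by push_cast; ring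
              rw [h1, h2]; ring
            rw [hstep, iht k, ihd (k+1) (by omega)]
            -- now pure sum manipulation
            have hDz : (fwdDiff (1:ℤ))^[k+1+N] f 0 = 0 := by
              rw [hvan (k+1+N) (by omega)]; rfl
            have hC : ∑ j ∈ range (N+1), (-1:ℝ)^j * ((t+1+j-1).choose j : ℝ) *
                  (fwdDiff (1:ℤ))^[k+1+j] f 0
                = ∑ j ∈ range N, (-1:ℝ)^j * ((t+1+j-1).choose j : ℝ) *
                  (fwdDiff (1:ℤ))^[k+1+j] f 0 := by
              rw [Finset.sum_range_succ, hDz]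
              simp
            rw [sub_eq_iff_eq_add, hC, Finset.sum_range_succ', Finset.sum_range_succ',
              add_right_comm, ← Finset.sum_add_distrib]
            congr 1
            · apply Finset.sum_congr rfl
              intro j _
              have e1 : t+1+(j+1)-1 = (t+j)+1 := by omega
              have e2 : t+1+j-1 = t+j := by omega
              have e3 : t+(j+1)-1 = t+j := by omega
              have e4 : k+1+j = k+(j+1) := by omega
              rw [e1, e2, e3, e4, Nat.choose_succ_succ]
              push_cast
              ring
            · simp
      intro k
      exact key N k (by omega)

-- key binomial identity
lemma star_id (lam : ℕ) (hlam : 1 ≤ lam) (m : ℕ) :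
    ∑ k ∈ range (m+1), ((k+lam-1).choose k : ℝ) / 2^k *
      ((-1:ℝ)^(m-k) * ((m+lam-1).choose (m-k) : ℝ))
    = ((m+lam-1).choose m : ℝ) * (-1)^m / 2^m := by
  have hN1 : ∀ k, k ≤ m → ((m+lam-1).choose (m-k)) * ((k+lam-1).choose k)
      = ((m+lam-1).choose m) * (m.choose k) := by
    intro k hk
    have h1 : (k+lam-1).choose k = (k+lam-1).choose (lam-1) := by
      rw [← Nat.choose_symm (show k ≤ k+lam-1 by omega)]
      congr 1
      omega
    have h2 : (m+lam-1).choose (m-k) = (m+lam-1).choose (k+lam-1) := by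
      rw [← Nat.choose_symm (show m-k ≤ m+lam-1 by omega)]
      congr 1
      omega
    have h3 : (m+lam-1).choose m = (m+lam-1).choose (lam-1) := by
      rw [← Nat.choose_symm (show m ≤ m+lam-1 by omega)]
      congr 1
      omega
    rw [h1, h2, h3]
    have := Nat.choose_mul (n := m+lam-1) (show lam-1 ≤ k+lam-1 by omega)
    rw [this]
    congr 2
    · omega
    · omega
  have hbin : ∑ k ∈ range (m+1), (1:ℝ)^k * (-2:ℝ)^(m-k) * (m.choose k : ℝ) = (-1:ℝ)^m := by
    rw [← add_pow]
    norm_num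
  calc ∑ k ∈ range (m+1), ((k+lam-1).choose k : ℝ) / 2^k *
        ((-1:ℝ)^(m-k) * ((m+lam-1).choose (m-k) : ℝ))
      = ∑ k ∈ range (m+1), ((m+lam-1).choose m : ℝ) / 2^m *
        ((1:ℝ)^k * (-2:ℝ)^(m-k) * (m.choose k : ℝ)) := by
        apply Finset.sum_congr rfl
        intro k hk
        rw [Finset.mem_range] at hk
        have hk' : k ≤ m := by omega
        have hcast : ((m+lam-1).choose (m-k) : ℝ) * ((k+lam-1).choose k : ℝ)
            = ((m+lam-1).choose m : ℝ) * (m.choose k : ℝ) := by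
          rw [← Nat.cast_mul, ← Nat.cast_mul, hN1 k hk']
        have hpow2 : (2:ℝ)^(m-k) * 2^k = 2^m := by
          rw [← pow_add]
          congr 1
          omega
        have hneg : (-2:ℝ)^(m-k) = (-1:ℝ)^(m-k) * 2^(m-k) := by
          rw [← neg_one_mul, mul_pow]
        field_simp
        rw [hneg]
        linear_combination (-1:ℝ)^(m-k) * 2^m * hcast -
          (-1:ℝ)^(m-k) * (((m+lam-1).choose m : ℝ) * (m.choose k : ℝ)) * hpow2
    _ = ((m+lam-1).choose m : ℝ) * (-1)^m / 2^m := by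
        rw [← Finset.mul_sum, hbin]
        ring

lemma triangle (lam : ℕ) (hlam : 1 ≤ lam) (n : ℕ) (d : ℕ → ℝ)
    (hd : ∀ m, n+1 ≤ m → d m = 0) :
    ∑ k ∈ range (n+1), (((k+lam-1).choose k : ℝ) / 2^k) *
      (∑ j ∈ range (n+2), (-1:ℝ)^j * (((k+lam)+j-1).choose j : ℝ) * d (k+j))
    = ∑ m ∈ range (n+1), ((m+lam-1).choose m : ℝ) * (-1)^m / 2^m * d m := by
  set F : ℕ → ℕ → ℝ := fun k m => ((k+lam-1).choose k : ℝ) / 2^k *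
      ((-1:ℝ)^(m-k) * ((m+lam-1).choose (m-k) : ℝ) * d m) with hF
  have hFz : ∀ k m, n+1 ≤ m → F k m = 0 := by
    intro k m hm
    rw [hF]
    simp [hd m hm]
  calc ∑ k ∈ range (n+1), (((k+lam-1).choose k : ℝ) / 2^k) *
        (∑ j ∈ range (n+2), (-1:ℝ)^j * (((k+lam)+j-1).choose j : ℝ) * d (k+j))
      = ∑ k ∈ range (n+1), ∑ j ∈ range (n+2), F k (k+j) := by
        apply Finset.sum_congr rfl
        intro k _
        rw [Finset.mul_sum]
        apply Finset.sum_congr rfl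
        intro j _
        rw [hF]
        have e1 : k + j - k = j := by omega
        have e2 : k + lam + j - 1 = (k+j) + lam - 1 := by omega
        simp only [e1, e2]
        try ring
    _ = ∑ k ∈ range (n+1), ∑ m ∈ range (n+1), (if k ≤ m then F k m else 0) := by
        apply Finset.sum_congr rfl
        intro k hk
        rw [Finset.mem_range] at hk
        have e1 : ∑ j ∈ range (n+2), F k (k+j) = ∑ m ∈ Finset.Ico k (k+(n+2)), F k m := by
          rw [Finset.sum_Ico_eq_sum_range]
          apply Finset.sum_congr
          · congr 1
            omega
          · intros
            rfl
        have e2 : ∑ m ∈ Finset.Ico k (k+(n+2)), F k m = ∑ m ∈ Finset.Ico k (n+1), F k m := by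
          symm
          apply Finset.sum_subset (Finset.Ico_subset_Ico le_rfl (by omega))
          intro m hm hnm
          simp only [Finset.mem_Ico] at hm hnm
          exact hFz k m (by omega)
        have e3 : Finset.Ico k (n+1) = (range (n+1)).filter (fun m => k ≤ m) := by
          ext a
          simp only [Finset.mem_Ico, Finset.mem_range, Finset.mem_filter]
          omega
        rw [e1, e2, e3, Finset.sum_filter]
    _ = ∑ m ∈ range (n+1), ∑ k ∈ range (n+1), (if k ≤ m then F k m else 0) :=
        Finset.sum_comm
    _ = ∑ m ∈ range (n+1), ∑ k ∈ range (m+1), F k m := by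
        apply Finset.sum_congr rfl
        intro m hm
        rw [Finset.mem_range] at hm
        rw [← Finset.sum_filter]
        apply Finset.sum_congr
        · ext a
          simp only [Finset.mem_filter, Finset.mem_range]
          omega
        · intros
          rfl
    _ = ∑ m ∈ range (n+1), ((m+lam-1).choose m : ℝ) * (-1)^m / 2^m * d m := by
        apply Finset.sum_congr rfl
        intro m _
        have : ∑ k ∈ range (m+1), F k m
            = (∑ k ∈ range (m+1), ((k+lam-1).choose k : ℝ) / 2^k *
                ((-1:ℝ)^(m-k) * ((m+lam-1).choose (m-k) : ℝ))) * d m := by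
          rw [Finset.sum_mul]
          apply Finset.sum_congr rfl
          intro k _
          rw [hF]
          try ring
        rw [this, star_id lam hlam m]
        try ring

end AuxHSE

theorem stmt15 (α β γ : ℝ) (hβ : β ≠ 0) (lam : ℕ) (hlam : 1 ≤ lam) (n : ℕ) :
    E lam n α β γ =
      ∑ k ∈ Finset.range (n + 1),
        HS n k α β γ * (Nat.choose (k + lam - 1) k : ℝ) * (Nat.factorial k : ℝ) * (-β) ^ k / 2 ^ k ∧
    E lam n α β γ =
      ∑ k ∈ Finset.range (n + 1),
        HS n k α (-β) (γ - β * lam) * (Nat.choose (k + lam - 1) k : ℝ) * (Nat.factorial k : ℝ) *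
          β ^ k / 2 ^ k := by
  refine ⟨rfl, ?_⟩
  set f : ℤ → ℝ := fun s => ∏ j ∈ Finset.range n, (β * s + γ - j * α) with hfdef
  -- f is the evaluation of a polynomial of degree ≤ n
  have hrep : f = fun s : ℤ => (∏ j ∈ Finset.range n,
      (Polynomial.C β * Polynomial.X + Polynomial.C (γ - j*α))).eval (s:ℝ) := by
    funext s
    rw [hfdef, Polynomial.eval_prod]
    apply Finset.prod_congr rfl
    intro j _
    simp only [Polynomial.eval_add, Polynomial.eval_mul, Polynomial.eval_C, Polynomial.eval_X]
    ring
  have hdeg : (∏ j ∈ Finset.range n,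
      (Polynomial.C β * Polynomial.X + Polynomial.C (γ - j*α))).natDegree ≤ n := by
    refine le_trans (Polynomial.natDegree_prod_le _ _) ?_
    have hb : ∀ j ∈ Finset.range n,
        (Polynomial.C β * Polynomial.X + Polynomial.C (γ - (j:ℝ)*α)).natDegree ≤ 1 :=
      fun j _ => Polynomial.natDegree_linear_le
    calc ∑ j ∈ Finset.range n,
          (Polynomial.C β * Polynomial.X + Polynomial.C (γ - (j:ℝ)*α)).natDegree
        ≤ ∑ _j ∈ Finset.range n, 1 := by
          apply Finset.sum_le_sum
          intro j hj
          exact hb j hj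
      _ = n := by simp
  have hpoly : (fwdDiff (1:ℤ))^[n+1] f = 0 := by
    rw [hrep]; exact vanish_of_natDegree_le n _ hdeg
  have hd0 : ∀ m, n+1 ≤ m → (fwdDiff (1:ℤ))^[m] f 0 = 0 := by
    intro m hm
    rw [iter_zero_of_ge f (n+1) hpoly hm]
    rfl
  -- gfact values are values of f
  have hg1 : ∀ s : ℕ, gfact (β * s + γ) α n = f (s:ℤ) := by
    intro s
    rw [hfdef, gfact]
    apply Finset.prod_congr rfl
    intro j _
    push_cast
    ring
  have hg2 : ∀ s : ℕ, gfact ((-β) * s + (γ - β*lam)) α n = f (-(s:ℤ) - lam) := by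
    intro s
    rw [hfdef, gfact]
    apply Finset.prod_congr rfl
    intro j _
    push_cast
    ring
  have h2k : ∀ k : ℕ, ((2:ℝ))^k ≠ 0 := fun k => by positivity
  have hfac : ∀ k : ℕ, ((k.factorial : ℝ)) ≠ 0 :=
    fun k => Nat.cast_ne_zero.mpr k.factorial_ne_zero
  have hβk : ∀ k : ℕ, (β:ℝ)^k ≠ 0 := fun k => pow_ne_zero _ hβ
  -- left-hand terms
  have hLk : ∀ k, HS n k α β γ * ((k+lam-1).choose k : ℝ) * (k.factorial : ℝ) * (-β)^k / 2^k
      = ((k+lam-1).choose k : ℝ) * (-1)^k / 2^k * ((fwdDiff (1:ℤ))^[k] f 0) := by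
    intro k
    rw [diff_sum f k, HS]
    have hsum : ∑ s ∈ Finset.range (k+1), (-1:ℝ)^(k-s) * (k.choose s : ℝ) * gfact (β*s+γ) α n
        = ∑ s ∈ Finset.range (k+1), (-1:ℝ)^(k-s) * (k.choose s : ℝ) * f (s:ℤ) := by
      apply Finset.sum_congr rfl
      intro s _
      rw [hg1 s]
    rw [hsum]
    have h3 : (-β)^k = (-1:ℝ)^k * β^k := by rw [← neg_one_mul, mul_pow]
    rw [h3]
    field_simp
  -- right-hand terms
  have hRk : ∀ k, HS n k α (-β) (γ - β*lam) * ((k+lam-1).choose k : ℝ) * (k.factorial : ℝ)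
        * β^k / 2^k
      = ((k+lam-1).choose k : ℝ) / 2^k * ((fwdDiff (1:ℤ))^[k] f (-((k+lam : ℕ):ℤ))) := by
    intro k
    rw [HS]
    have hsum : ∑ s ∈ Finset.range (k+1), (-1:ℝ)^(k-s) * (k.choose s : ℝ)
          * gfact ((-β)*s+(γ-β*lam)) α n
        = (fwdDiff (1:ℤ))^[k] (fun s : ℤ => f (-s - lam)) 0 := by
      rw [diff_sum (fun s : ℤ => f (-s - lam)) k]
      apply Finset.sum_congr rfl
      intro s _
      rw [hg2 s]
    have hrefl : (fwdDiff (1:ℤ))^[k] (fun s : ℤ => f (-s - lam)) 0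
        = (-1:ℝ)^k * (fwdDiff (1:ℤ))^[k] f (-((k+lam : ℕ):ℤ)) := by
      rw [diff_reflect k f (lam:ℤ)]
      beta_reduce
      have : (-(0:ℤ) - lam - k) = -((k+lam : ℕ):ℤ) := by push_cast; ring
      rw [this]
    rw [hsum, hrefl]
    have h3 : (-β)^k = (-1:ℝ)^k * β^k := by rw [← neg_one_mul, mul_pow]
    rw [h3]
    rcases neg_one_pow_eq_or ℝ k with hpm | hpm <;> rw [hpm] <;> field_simp <;> ring
  -- assemble
  calc E lam n α β γ
      = ∑ k ∈ Finset.range (n+1), ((k+lam-1).choose k : ℝ) * (-1)^k / 2^k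
          * ((fwdDiff (1:ℤ))^[k] f 0) := by
        rw [E]
        exact Finset.sum_congr rfl (fun k _ => hLk k)
    _ = ∑ k ∈ Finset.range (n+1), (((k+lam-1).choose k : ℝ) / 2^k) *
          (∑ j ∈ Finset.range (n+2), (-1:ℝ)^j * (((k+lam)+j-1).choose j : ℝ)
            * ((fwdDiff (1:ℤ))^[k+j] f 0)) := by
        rw [← triangle lam hlam n (fun m => (fwdDiff (1:ℤ))^[m] f 0) hd0]
    _ = ∑ k ∈ Finset.range (n+1), (((k+lam-1).choose k : ℝ) / 2^k) *
          ((fwdDiff (1:ℤ))^[k] f (-((k+lam : ℕ):ℤ))) := by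
        apply Finset.sum_congr rfl
        intro k _
        rw [invNewton f (n+1) hpoly (k+lam) k]
    _ = ∑ k ∈ Finset.range (n + 1),
          HS n k α (-β) (γ - β * lam) * ((k + lam - 1).choose k : ℝ) * (k.factorial : ℝ)
            * β ^ k / 2 ^ k := by
        exact Finset.sum_congr rfl (fun k _ => (hRk k).symm)
end

section
/- For all real α, β ≠ 0, γ₁, γ₂, all λ₁, λ₂ ∈ ℕ with λ₁, λ₂ ≥ 1, and all n ≥ 0: Σ_{k=0}^{n} C(n,k) · E_k^{(λ₁)}(α,β,α+γ₁-β) · E_{n-k}^{(λ₂)}(α,β,γ₂) = E_n^{(λ₁+λ₂)}(α,β,α+γ₁+γ₂-β). -/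
open Finset

section Aux
open Polynomial



noncomputable abbrev fd : (ℕ → ℝ) → (ℕ → ℝ) := fwdDiff 1

lemma fd_apply (g : ℕ → ℝ) (x : ℕ) : fd g x = g (x + 1) - g x := rfl

def PolLe (n : ℕ) (g : ℕ → ℝ) : Prop := ∀ x, fd^[n + 1] g x = 0

lemma fd_zero_fn : fd (fun _ => (0 : ℝ)) = fun _ => 0 := by
  funext x; simp [fd_apply]

lemma fd_iter_zero_fn (m : ℕ) : fd^[m] (fun _ => (0 : ℝ)) = fun _ => 0 := by
  induction m with
  | zero => rfl
  | succ m ih => rw [Function.iterate_succ_apply, fd_zero_fn, ih]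

lemma PolLe.high {n : ℕ} {g : ℕ → ℝ} (h : PolLe n g) {m : ℕ} (hm : n < m) :
    fd^[m] g = fun _ => 0 := by
  have hm2 : m = (m - (n + 1)) + (n + 1) := by omega
  rw [hm2, Function.iterate_add_apply]
  have h2 : fd^[n + 1] g = fun _ => 0 := funext h
  rw [h2, fd_iter_zero_fn]

lemma PolLe.mono {j n : ℕ} {g : ℕ → ℝ} (h : PolLe j g) (hjn : j ≤ n) : PolLe n g := by
  intro x
  rw [h.high (show j < n + 1 by omega)]

noncomputable def Sop (w : ℕ → ℝ) (N : ℕ) (g : ℕ → ℝ) : ℕ → ℝ :=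
  fun x => ∑ k ∈ range (N + 1), w k * fd^[k] g x

lemma fd_iter_succ_eval (k : ℕ) (g : ℕ → ℝ) (x : ℕ) :
    fd^[k] (fd g) x = fd^[k + 1] g x := by
  rw [← Function.iterate_succ_apply]

lemma fd_Sop (w : ℕ → ℝ) (N : ℕ) (g : ℕ → ℝ) : fd (Sop w N g) = Sop w N (fd g) := by
  funext x
  simp only [fd_apply, Sop, ← Finset.sum_sub_distrib]
  refine Finset.sum_congr rfl fun k _ => ?_
  rw [← mul_sub, fd_iter_succ_eval]
  congr 1
  rw [← fd_apply, ← Function.iterate_succ_apply' fd k g]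

lemma fd_iter_Sop (m : ℕ) (w : ℕ → ℝ) (N : ℕ) (g : ℕ → ℝ) :
    fd^[m] (Sop w N g) = Sop w N (fd^[m] g) := by
  induction m generalizing g with
  | zero => rfl
  | succ m ih => rw [Function.iterate_succ_apply, fd_Sop, ih, Function.iterate_succ_apply]

lemma polLe_Sop {n : ℕ} {g : ℕ → ℝ} (h : PolLe n g) (w : ℕ → ℝ) (N : ℕ) :
    PolLe n (Sop w N g) := by
  intro x
  rw [fd_iter_Sop]
  have h2 : fd^[n + 1] g = fun _ => 0 := funext h
  rw [h2]
  simp only [Sop, fd_iter_zero_fn]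
  simp

lemma Sop_ext {j : ℕ} {g : ℕ → ℝ} (h : PolLe j g) (w : ℕ → ℝ) {N : ℕ} (hjN : j ≤ N) :
    Sop w N g = Sop w j g := by
  funext x
  refine (Finset.sum_subset (Finset.range_subset_range.2 (by omega)) fun k hk hk' => ?_).symm
  have hjk : j < k := by
    simp only [Finset.mem_range] at hk hk'; omega
  rw [h.high hjk]
  simp

lemma Sop_sum {ι : Type*} (w : ℕ → ℝ) (N : ℕ) (s : Finset ι) (c : ι → ℝ) (F : ι → ℕ → ℝ) :
    Sop w N (fun x => ∑ i ∈ s, c i * F i x) = fun x => ∑ i ∈ s, c i * Sop w N (F i) x := by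
  funext x
  have hfun : (fun x => ∑ i ∈ s, c i * F i x) = ∑ i ∈ s, c i • F i := by
    funext y; simp [Finset.sum_apply]
  simp only [Sop, hfun, fwdDiff_iter_finset_sum, fwdDiff_iter_const_smul]
  simp only [Finset.sum_apply, Pi.smul_apply, smul_eq_mul, Finset.mul_sum]
  rw [Finset.sum_comm]
  refine Finset.sum_congr rfl fun i _ => ?_
  refine Finset.sum_congr rfl fun k _ => ?_
  ring

lemma fd_shift (g : ℕ → ℝ) (y : ℕ) : fd (fun x => g (x + y)) = fun x => fd g (x + y) := by
  funext x
  rw [fd_apply, fd_apply, add_right_comm]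

lemma fd_iter_shift (k : ℕ) (g : ℕ → ℝ) (y : ℕ) :
    fd^[k] (fun x => g (x + y)) = fun x => fd^[k] g (x + y) := by
  induction k generalizing g with
  | zero => rfl
  | succ k ih => rw [Function.iterate_succ_apply, fd_shift, ih, Function.iterate_succ_apply]

lemma Sop_shift (w : ℕ → ℝ) (N : ℕ) (g : ℕ → ℝ) (y : ℕ) :
    Sop w N (fun x => g (x + y)) = fun x => Sop w N g (x + y) := by
  funext x
  simp only [Sop, fd_iter_shift]



noncomputable def Uop (N : ℕ) (g : ℕ → ℝ) : ℕ → ℝ := Sop (fun k => (-1/2 : ℝ) ^ k) N g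

noncomputable def Wop (lam N : ℕ) (g : ℕ → ℝ) : ℕ → ℝ :=
  Sop (fun k => ((k + lam - 1).choose k : ℝ) * (-1/2 : ℝ) ^ k) N g

noncomputable def Thalf (g : ℕ → ℝ) : ℕ → ℝ := fun x => (g (x + 1) + g x) / 2

lemma Thalf_Sop_apply (w : ℕ → ℝ) (N : ℕ) (g : ℕ → ℝ) (x : ℕ) :
    Thalf (Sop w N g) x = Sop w N g x + Sop w N (fd g) x / 2 := by
  have h2 := congrFun (fd_Sop w N g) x
  simp only [fd_apply] at h2
  simp only [Thalf]
  linarith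

lemma telescope {n : ℕ} {g : ℕ → ℝ} (h : PolLe n g) (x : ℕ) :
    ∑ k ∈ range (n + 1),
      ((-1/2 : ℝ) ^ k * fd^[k] g x - (-1/2 : ℝ) ^ (k + 1) * fd^[k + 1] g x) = g x := by
  rw [Finset.sum_range_sub' (f := fun k => (-1/2 : ℝ) ^ k * fd^[k] g x) (n + 1)]
  simp [h x]

lemma Thalf_Uop {n : ℕ} {g : ℕ → ℝ} (h : PolLe n g) : Thalf (Uop n g) = g := by
  funext x
  rw [Uop, Thalf_Sop_apply, ← telescope h x]
  simp only [Sop, Finset.sum_div, ← Finset.sum_add_distrib]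
  refine Finset.sum_congr rfl fun k _ => ?_
  rw [fd_iter_succ_eval]
  ring

lemma Uop_Thalf {n : ℕ} {g : ℕ → ℝ} (h : PolLe n g) : Uop n (Thalf g) = g := by
  funext x
  have hTg : Thalf g = g + (1/2 : ℝ) • fd g := by
    funext y
    simp only [Thalf, Pi.add_apply, Pi.smul_apply, smul_eq_mul, fd_apply]
    ring
  rw [Uop, Sop, ← telescope h x]
  refine Finset.sum_congr rfl fun k _ => ?_
  rw [hTg, fwdDiff_iter_add, fwdDiff_iter_const_smul]
  simp only [Pi.add_apply, Pi.smul_apply, smul_eq_mul]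
  rw [fd_iter_succ_eval]
  ring

lemma Thalf_Wop {n : ℕ} {g : ℕ → ℝ} (h : PolLe n g) (lam : ℕ) :
    Thalf (Wop (lam + 2) n g) = Wop (lam + 1) n g := by
  funext x
  rw [Wop, Wop, Thalf_Sop_apply]
  set F : ℕ → ℝ := fun j =>
      ((lam + j).choose j : ℝ) * (-1/2 : ℝ) ^ j * fd^[j] g x
        - ((lam + 1 + j).choose j : ℝ) * (-1/2 : ℝ) ^ j * fd^[j] g x with hF
  have hterm : ∀ k, (((k + (lam + 2) - 1).choose k : ℝ) * (-1/2 : ℝ) ^ k)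
      * fd^[k] (fd g) x / 2 = F (k + 1) := by
    intro k
    rw [hF]
    simp only
    rw [fd_iter_succ_eval]
    have e2 : (lam + 1 + (k + 1)).choose (k + 1)
        = (lam + (k + 1)).choose (k + 1) + (lam + k + 1).choose k := by
      rw [show lam + 1 + (k + 1) = (lam + k + 1) + 1 by omega, Nat.choose_succ_succ,
        show lam + (k + 1) = lam + k + 1 by omega]
      simp [Nat.succ_eq_add_one]
      omega
    rw [e2, show k + (lam + 2) - 1 = lam + k + 1 by omega]
    push_cast
    ring
  have hB : ∑ k ∈ range (n + 1),
      (((k + (lam + 2) - 1).choose k : ℝ) * (-1/2 : ℝ) ^ k) * fd^[k] (fd g) x / 2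
      = ∑ k ∈ range (n + 1), F (k + 1) := Finset.sum_congr rfl fun k _ => hterm k
  have hshift : ∑ k ∈ range (n + 1), F (k + 1) = ∑ j ∈ range (n + 1), F j := by
    have h1 := Finset.sum_range_succ' F (n + 1)
    -- h1 : ∑ j ∈ range (n+2), F j = ∑ k ∈ range (n+1), F (k+1) + F 0
    have hF0 : F 0 = 0 := by simp [hF]
    have hFn : F (n + 1) = 0 := by
      simp only [hF, h x]; ring
    have h2 : ∑ j ∈ range (n + 2), F j = ∑ j ∈ range (n + 1), F j + F (n + 1) :=
      Finset.sum_range_succ F (n + 1)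
    rw [hFn, add_zero] at h2
    rw [hF0, add_zero] at h1
    rw [← h1, h2]
  have hsplit : ∑ j ∈ range (n + 1), F j
      = ∑ k ∈ range (n + 1), ((k + (lam + 1) - 1).choose k : ℝ) * (-1/2 : ℝ) ^ k * fd^[k] g x
        - ∑ k ∈ range (n + 1), ((k + (lam + 2) - 1).choose k : ℝ) * (-1/2 : ℝ) ^ k
            * fd^[k] g x := by
    rw [← Finset.sum_sub_distrib]
    refine Finset.sum_congr rfl fun k _ => ?_
    rw [hF, show k + (lam + 1) - 1 = lam + k by omega,
      show k + (lam + 2) - 1 = lam + 1 + k by omega]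
  have hS2 : Sop (fun k => ((k + (lam + 2) - 1).choose k : ℝ) * (-1/2 : ℝ) ^ k) n (fd g) x / 2
      = ∑ k ∈ range (n + 1),
          (((k + (lam + 2) - 1).choose k : ℝ) * (-1/2 : ℝ) ^ k) * fd^[k] (fd g) x / 2 := by
    rw [Sop, Finset.sum_div]
  rw [hS2, hB, hshift, hsplit, Sop, Sop]
  ring



lemma Wop_eq_iter {n : ℕ} {g : ℕ → ℝ} (h : PolLe n g) {lam : ℕ} (hlam : 1 ≤ lam) :
    Wop lam n g = (Uop n)^[lam] g := by
  obtain ⟨m, rfl⟩ : ∃ m, lam = m + 1 := ⟨lam - 1, by omega⟩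
  clear hlam
  induction m with
  | zero =>
    rw [Function.iterate_one, Wop, Uop]
    have : (fun k => ((k + 1 - 1).choose k : ℝ) * (-1/2 : ℝ) ^ k)
        = fun k : ℕ => (-1/2 : ℝ) ^ k := by
      funext k
      simp [Nat.add_sub_cancel]
    rw [this]
  | succ m ih =>
    have h1 : Thalf (Wop (m + 2) n g) = Wop (m + 1) n g := Thalf_Wop h m
    have h2 : Uop n (Thalf (Wop (m + 2) n g)) = Wop (m + 2) n g :=
      Uop_Thalf (polLe_Sop h _ n)
    rw [h1, ih] at h2
    rw [← h2]
    exact (Function.iterate_succ_apply' (Uop n) (m + 1) g).symm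

lemma E_eq_Wop (lam n : ℕ) (α β γ : ℝ) (hβ : β ≠ 0) :
    E lam n α β γ = Wop lam n (fun s : ℕ => gfact (β * s + γ) α n) 0 := by
  rw [E, Wop, Sop]
  refine Finset.sum_congr rfl fun k _ => ?_
  have hfd : fd^[k] (fun s : ℕ => gfact (β * s + γ) α n) 0
      = ∑ s ∈ range (k + 1), (-1 : ℝ) ^ (k - s) * (Nat.choose k s : ℝ)
          * gfact (β * s + γ) α n := by
    rw [fwdDiff_iter_eq_sum_shift]
    refine Finset.sum_congr rfl fun s _ => ?_
    have hpt : (0 + s • 1 : ℕ) = s := by simp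
    rw [hpt, zsmul_eq_mul]
    push_cast
    ring
  rw [hfd, HS]
  have hk : (Nat.factorial k : ℝ) ≠ 0 := Nat.cast_ne_zero.mpr (Nat.factorial_ne_zero k)
  have hb : (β : ℝ) ^ k ≠ 0 := pow_ne_zero _ hβ
  have e1 : (-β) ^ k = (-1 : ℝ) ^ k * β ^ k := by rw [neg_pow]
  have e2 : ((-1 : ℝ)/2) ^ k = (-1 : ℝ) ^ k / 2 ^ k := by rw [div_pow]
  have h2 : (2 : ℝ) ^ k ≠ 0 := by positivity
  field_simp [e1, e2]
  have h3 : (2 : ℝ) ^ k * (-(1 / 2)) ^ k = (-1) ^ k := by rw [← mul_pow]; norm_num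
  rw [mul_assoc _ ((2 : ℝ) ^ k), h3, e1]
  ring

-- polynomial degree machinery

lemma fd_eval (p : ℝ[X]) :
    fd (fun s : ℕ => p.eval (s : ℝ)) = fun s : ℕ => (p.comp (X + 1) - p).eval (s : ℝ) := by
  funext s
  simp only [fd_apply, eval_sub, eval_comp, eval_add, eval_X, eval_one, Nat.cast_add,
    Nat.cast_one]

lemma polLe_eval : ∀ (n : ℕ) (p : ℝ[X]), p.natDegree ≤ n →
    PolLe n (fun s : ℕ => p.eval (s : ℝ)) := by
  intro n
  induction n with
  | zero =>
    intro p hp x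
    have hc : p = C (p.coeff 0) := p.eq_C_of_natDegree_le_zero hp
    have : (fun s : ℕ => p.eval (s : ℝ)) = fun _ => p.coeff 0 := by
      funext s; rw [hc]; simp
    rw [this, Function.iterate_one]
    simp [fd_apply]
  | succ n ih =>
    intro p hp x
    by_cases hd : p.natDegree = 0
    · have hc : p = C (p.coeff 0) := p.eq_C_of_natDegree_le_zero (le_of_eq hd)
      have hconst : (fun s : ℕ => p.eval (s : ℝ)) = fun _ => p.coeff 0 := by
        funext s; rw [hc]; simp
      rw [hconst, Function.iterate_succ_apply]
      have : fd (fun _ : ℕ => p.coeff 0) = fun _ => 0 := by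
        funext y; simp [fd_apply]
      rw [this, fd_iter_zero_fn]
    · -- nonconstant
      have hp0 : p ≠ 0 := fun hz => hd (by simp [hz])
      have hXC : (X + 1 : ℝ[X]) = X + C 1 := by rw [C_1]
      have hnd1 : (X + 1 : ℝ[X]).natDegree = 1 := by rw [hXC, natDegree_X_add_C]
      have hlc : (p.comp (X + 1)).leadingCoeff = p.leadingCoeff := by
        rw [leadingCoeff_comp (by rw [hnd1]; norm_num)]
        rw [hXC, Monic.leadingCoeff (monic_X_add_C 1), one_pow, mul_one]
      have hndc : (p.comp (X + 1)).natDegree = p.natDegree := by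
        rw [natDegree_comp, hnd1, mul_one]
      have hcomp0 : p.comp (X + 1) ≠ 0 := by
        intro hz
        apply hp0
        rw [← leadingCoeff_eq_zero, ← hlc, hz, leadingCoeff_zero]
      have hdeg : (p.comp (X + 1)).degree = p.degree := by
        rw [degree_eq_natDegree hcomp0, degree_eq_natDegree hp0, hndc]
      have hlt : (p.comp (X + 1) - p).degree < p.degree := by
        have := degree_sub_lt hdeg hcomp0 hlc
        rwa [hdeg] at this
      have hq : (p.comp (X + 1) - p).natDegree ≤ n := by
        by_cases hz : p.comp (X + 1) - p = 0
        · simp [hz]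
        · have h10 : (p.comp (X + 1) - p).natDegree < p.natDegree :=
            natDegree_lt_natDegree hz hlt
          omega
      rw [Function.iterate_succ_apply, fd_eval]
      exact ih _ hq x

lemma polLe_gfact (n : ℕ) (β γ α : ℝ) :
    PolLe n (fun s : ℕ => gfact (β * s + γ) α n) := by
  set p : ℝ[X] := ∏ j ∈ range n, (C β * X + C (γ - j * α)) with hp
  have heval : (fun s : ℕ => gfact (β * s + γ) α n) = fun s : ℕ => p.eval (s : ℝ) := by
    funext s
    rw [hp, eval_prod, gfact]
    refine Finset.prod_congr rfl fun j _ => ?_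
    simp only [eval_add, eval_mul, eval_C, eval_X]
    ring
  rw [heval]
  refine polLe_eval n p ?_
  rw [hp]
  refine le_trans (natDegree_prod_le _ _) ?_
  have hb : ∀ j ∈ range n, (C β * X + C (γ - (j : ℝ) * α)).natDegree ≤ 1 :=
    fun j _ => natDegree_linear_le
  refine le_trans (Finset.sum_le_sum (g := fun _ => 1) hb) ?_
  simp

lemma gfact_vandermonde (α a b : ℝ) (n : ℕ) :
    ∑ k ∈ range (n + 1), (n.choose k : ℝ) * gfact a α k * gfact b α (n - k)
      = gfact (a + b) α n := by
  induction n with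
  | zero => simp [gfact]
  | succ n ih =>
    set T : ℕ → ℝ := fun k => gfact a α k * gfact b α (n + 1 - k) with hT
    have step1 : ∑ k ∈ range (n + 2), ((n + 1).choose k : ℝ) * gfact a α k
          * gfact b α (n + 1 - k)
        = ∑ k ∈ range (n + 1), ((n.choose k : ℝ) + (n.choose (k + 1) : ℝ)) * T (k + 1)
          + T 0 := by
      have h1 := Finset.sum_range_succ' (fun k => ((n + 1).choose k : ℝ) * T k) (n + 1)
      have h2 : ∀ k, ((n + 1).choose (k + 1) : ℝ) = (n.choose k : ℝ) + (n.choose (k + 1) : ℝ) := by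
        intro k; exact_mod_cast congrArg (Nat.cast (R := ℝ)) (Nat.choose_succ_succ n k)
      calc ∑ k ∈ range (n + 2), ((n + 1).choose k : ℝ) * gfact a α k * gfact b α (n + 1 - k)
          = ∑ k ∈ range (n + 2), ((n + 1).choose k : ℝ) * T k := by
            refine Finset.sum_congr rfl fun k _ => ?_; rw [hT]; ring
        _ = ∑ k ∈ range (n + 1), ((n + 1).choose (k + 1) : ℝ) * T (k + 1)
              + ((n + 1).choose 0 : ℝ) * T 0 := h1
        _ = ∑ k ∈ range (n + 1), ((n.choose k : ℝ) + (n.choose (k + 1) : ℝ)) * T (k + 1)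
              + T 0 := by
            rw [Nat.choose_zero_right]
            push_cast
            rw [one_mul]
            congr 1
            exact Finset.sum_congr rfl fun k _ => by rw [h2 k]
    have step2 : ∑ k ∈ range (n + 1), (n.choose (k + 1) : ℝ) * T (k + 1) + T 0
        = ∑ k ∈ range (n + 1), (n.choose k : ℝ) * T k := by
      have h3 := Finset.sum_range_succ' (fun k => (n.choose k : ℝ) * T k) (n + 1)
      have h4 := Finset.sum_range_succ (fun k => (n.choose k : ℝ) * T k) (n + 1)
      rw [Nat.choose_zero_right] at h3
      push_cast at h3
      rw [one_mul] at h3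
      rw [h4, Nat.choose_succ_self] at h3
      push_cast at h3
      rw [zero_mul, add_zero] at h3
      exact h3.symm
    have gfact_succ : ∀ (t : ℝ) (m : ℕ), gfact t α (m + 1) = gfact t α m * (t - m * α) := by
      intro t m; rw [gfact, gfact, Finset.prod_range_succ]
    rw [step1]
    have hexp : ∀ k ∈ range (n + 1), ((n.choose k : ℝ) + (n.choose (k + 1) : ℝ)) * T (k + 1)
        = (n.choose k : ℝ) * T (k + 1) + (n.choose (k + 1) : ℝ) * T (k + 1) := fun k _ => by ring
    rw [Finset.sum_congr rfl hexp, Finset.sum_add_distrib, add_assoc, step2,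
      ← Finset.sum_add_distrib]
    have hterm : ∀ k ∈ range (n + 1),
        (n.choose k : ℝ) * T (k + 1) + (n.choose k : ℝ) * T k
          = ((n.choose k : ℝ) * gfact a α k * gfact b α (n - k)) * (a + b - n * α) := by
      intro k hk
      have hkn : k ≤ n := by
        have := Finset.mem_range.mp hk; omega
      have h5 : n + 1 - (k + 1) = n - k := by omega
      have h6 : n + 1 - k = (n - k) + 1 := by omega
      have h9 : ((n - k : ℕ) : ℝ) = (n : ℝ) - k := by rw [Nat.cast_sub hkn]
      rw [hT]
      simp only
      rw [h5, h6, gfact_succ a k, gfact_succ b (n - k), h9]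
      ring
    rw [Finset.sum_congr rfl hterm, ← Finset.sum_mul, ih, gfact_succ]


lemma Uop_sum {ι : Type*} (N : ℕ) (s : Finset ι) (c : ι → ℝ) (F : ι → ℕ → ℝ) :
    Uop N (fun x => ∑ i ∈ s, c i * F i x) = fun x => ∑ i ∈ s, c i * Uop N (F i) x :=
  Sop_sum _ _ _ _ _

lemma Uop_iter_sum {ι : Type*} (N lam : ℕ) (s : Finset ι) (c : ι → ℝ) (F : ι → ℕ → ℝ) :
    (Uop N)^[lam] (fun x => ∑ i ∈ s, c i * F i x)
      = fun x => ∑ i ∈ s, c i * (Uop N)^[lam] (F i) x := by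
  induction lam generalizing F with
  | zero => simp only [Function.iterate_zero, id_eq]
  | succ lam ih =>
    rw [Function.iterate_succ_apply, Uop_sum, ih (fun i => Uop N (F i))]
    funext x
    refine Finset.sum_congr rfl fun i _ => ?_
    rw [Function.iterate_succ_apply]

lemma Uop_iter_shift (N lam : ℕ) (g : ℕ → ℝ) (y : ℕ) :
    (Uop N)^[lam] (fun x => g (x + y)) = fun x => (Uop N)^[lam] g (x + y) := by
  induction lam generalizing g with
  | zero => simp only [Function.iterate_zero, id_eq]
  | succ lam ih =>
    have hs : Uop N (fun x => g (x + y)) = fun x => Uop N g (x + y) := Sop_shift _ _ _ _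
    rw [Function.iterate_succ_apply, hs, ih (Uop N g)]
    funext x
    rw [Function.iterate_succ_apply]

end Aux

lemma Wop_ext {j : ℕ} {g : ℕ → ℝ} (h : PolLe j g) (lam : ℕ) {N : ℕ} (hjN : j ≤ N) :
    Wop lam N g = Wop lam j g :=
  Sop_ext h _ hjN

theorem stmt16 (α β γ₁ γ₂ : ℝ) (hβ : β ≠ 0) (lam₁ lam₂ : ℕ)
    (h₁ : 1 ≤ lam₁) (h₂ : 1 ≤ lam₂) (n : ℕ) :
    ∑ k ∈ Finset.range (n + 1),
        (Nat.choose n k : ℝ) * E lam₁ k α β (α + γ₁ - β) * E lam₂ (n - k) α β γ₂ =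
      E (lam₁ + lam₂) n α β (α + γ₁ + γ₂ - β) := by
  have hPolP : PolLe n (fun s : ℕ => gfact (β * s + (α + γ₁ + γ₂ - β)) α n) :=
    polLe_gfact n β (α + γ₁ + γ₂ - β) α
  -- rewrite RHS
  have hRHS : E (lam₁ + lam₂) n α β (α + γ₁ + γ₂ - β)
      = (Uop n)^[lam₁ + lam₂] (fun s : ℕ => gfact (β * s + (α + γ₁ + γ₂ - β)) α n) 0 := by
    rw [E_eq_Wop _ _ _ _ _ hβ, Wop_eq_iter hPolP (by omega)]
  -- rewrite the LHS factors
  have hE1 : ∀ k, k ≤ n → E lam₁ k α β (α + γ₁ - β)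
      = (Uop n)^[lam₁] (fun s : ℕ => gfact (β * s + (α + γ₁ - β)) α k) 0 := by
    intro k hkn
    rw [E_eq_Wop _ _ _ _ _ hβ,
      ← Wop_ext (polLe_gfact k β (α + γ₁ - β) α) lam₁ hkn,
      Wop_eq_iter ((polLe_gfact k β (α + γ₁ - β) α).mono hkn) h₁]
  have hE2 : ∀ k, k ≤ n → E lam₂ (n - k) α β γ₂
      = (Uop n)^[lam₂] (fun s : ℕ => gfact (β * s + γ₂) α (n - k)) 0 := by
    intro k hkn
    rw [E_eq_Wop _ _ _ _ _ hβ,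
      ← Wop_ext (polLe_gfact (n - k) β γ₂ α) lam₂ (Nat.sub_le n k),
      Wop_eq_iter ((polLe_gfact (n - k) β γ₂ α).mono (Nat.sub_le n k)) h₂]
  have hL : ∀ k ∈ range (n + 1),
      (Nat.choose n k : ℝ) * E lam₁ k α β (α + γ₁ - β) * E lam₂ (n - k) α β γ₂
        = ((n.choose k : ℝ)
            * (Uop n)^[lam₁] (fun s : ℕ => gfact (β * s + (α + γ₁ - β)) α k) 0)
          * (Uop n)^[lam₂] (fun s : ℕ => gfact (β * s + γ₂) α (n - k)) 0 := by
    intro k hk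
    have hkn : k ≤ n := by have := Finset.mem_range.mp hk; omega
    rw [hE1 k hkn, hE2 k hkn]
  rw [Finset.sum_congr rfl hL, hRHS]
  -- pull the sum inside the outer operator iterate
  have h2 := congrFun (Uop_iter_sum n lam₂ (range (n + 1))
      (fun k => (n.choose k : ℝ)
        * (Uop n)^[lam₁] (fun s : ℕ => gfact (β * s + (α + γ₁ - β)) α k) 0)
      (fun k => fun s : ℕ => gfact (β * s + γ₂) α (n - k))) 0
  rw [← h2]
  -- identify the inner function with (Uop n)^[lam₁] P
  have hH : (fun y : ℕ => ∑ k ∈ range (n + 1),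
        ((n.choose k : ℝ)
            * (Uop n)^[lam₁] (fun s : ℕ => gfact (β * s + (α + γ₁ - β)) α k) 0)
          * gfact (β * y + γ₂) α (n - k))
      = (Uop n)^[lam₁] (fun s : ℕ => gfact (β * s + (α + γ₁ + γ₂ - β)) α n) := by
    funext y
    have e1 : ∀ k ∈ range (n + 1),
        ((n.choose k : ℝ)
            * (Uop n)^[lam₁] (fun s : ℕ => gfact (β * s + (α + γ₁ - β)) α k) 0)
          * gfact (β * y + γ₂) α (n - k)
        = ((n.choose k : ℝ) * gfact (β * y + γ₂) α (n - k))
            * (Uop n)^[lam₁] (fun s : ℕ => gfact (β * s + (α + γ₁ - β)) α k) 0 :=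
      fun k _ => by ring
    rw [Finset.sum_congr rfl e1]
    have e2 := congrFun (Uop_iter_sum n lam₁ (range (n + 1))
        (fun k => (n.choose k : ℝ) * gfact (β * y + γ₂) α (n - k))
        (fun k => fun s : ℕ => gfact (β * s + (α + γ₁ - β)) α k)) 0
    rw [← e2]
    have e3 : (fun x : ℕ => ∑ k ∈ range (n + 1),
          ((n.choose k : ℝ) * gfact (β * y + γ₂) α (n - k))
            * gfact (β * x + (α + γ₁ - β)) α k)
        = fun x : ℕ =>
            (fun s : ℕ => gfact (β * s + (α + γ₁ + γ₂ - β)) α n) (x + y) := by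
      funext x
      simp only
      have e4 : β * ((x + y : ℕ) : ℝ) + (α + γ₁ + γ₂ - β)
          = (β * x + (α + γ₁ - β)) + (β * y + γ₂) := by push_cast; ring
      rw [e4, ← gfact_vandermonde α (β * x + (α + γ₁ - β)) (β * y + γ₂) n]
      exact Finset.sum_congr rfl fun k _ => by ring
    rw [e3, congrFun (Uop_iter_shift n lam₁
      (fun s : ℕ => gfact (β * s + (α + γ₁ + γ₂ - β)) α n) y) 0, zero_add]
  rw [hH, ← congrFun (Function.iterate_add_apply (Uop n) lam₂ lam₁
    (fun s : ℕ => gfact (β * s + (α + γ₁ + γ₂ - β)) α n)) 0, add_comm lam₂ lam₁]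
end
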